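/- arXiv:2511.05700 — 7 statements merged into one kernel-verified Lean document; each statement's English description precedes it below -/
import Mathlib

section
/- In the SAT-pricing instance constructed from an ∃∀-DNF-SAT instance ∃A∀B φ(A,B) with |A| = |B| = n and M = 2n: if the follower's solution X contains the literal h₁, then the follower's profit p(X) − d(X ∩ U_L) equals exactly n, independently of the leader's price function d. -/
/-- Variables of the SAT-pricing instance of Theorem 5. -/
inductive GVar (n : ℕ) : Type where
  | h1 | h2 | z1 | z2
  | vt (i : Fin n) | vf (i : Fin n) | vo (i : Fin n)
  | va (i : Fin n) | vb (i : Fin n)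
  deriving DecidableEq, Fintype

/-- Leader elements: the positive literals z₁, vᵗᵢ, vᶠᵢ. -/
def GVar.isLeader {n : ℕ} : GVar n → Bool
  | .z1 => true
  | .vt _ => true
  | .vf _ => true
  | _ => false

/-- Profits on positive literals, with M = 2n. -/
def gProfit (n : ℕ) : GVar n → ℕ
  | .z1 => 2 * n
  | .vt _ => 2 * n
  | .vf _ => 2 * n
  | .vo _ => 1
  | .h1 => n
  | .z2 => 1
  | .h2 => 0
  | .va _ => 0
  | .vb _ => 0

/-- Satisfying assignments of the constructed CNF formula of Theorem 5,
where `φ` is the given DNF formula on variables A, B. -/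
def SatAssign (n : ℕ) (φ : (Fin n → Bool) → (Fin n → Bool) → Bool)
    (σ : GVar n → Bool) : Prop :=
  (σ .h1 = true ∨ σ .h2 = true) ∧
  (σ .h1 = true → ∀ v : GVar n, v ≠ .h1 → σ v = false) ∧
  (σ .h2 = true → σ .z1 ≠ σ .z2) ∧
  (σ .h2 = true → σ .z2 = true →
      φ (fun i => σ (.va i)) (fun i => σ (.vb i)) = false) ∧
  (σ .h2 = true → ∀ i : Fin n,
    ((σ (.vt i) = true ∨ σ (.vf i) = true ∨ σ (.vo i) = true) ∧
     ¬(σ (.vt i) = true ∧ σ (.vf i) = true) ∧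
     ¬(σ (.vt i) = true ∧ σ (.vo i) = true) ∧
     ¬(σ (.vf i) = true ∧ σ (.vo i) = true)) ∧
    (σ (.vt i) = true → σ (.va i) = true) ∧
    (σ (.vf i) = true → σ (.va i) = false) ∧
    (σ (.vo i) = true → σ .z1 = true))

/-- Gross profit p(X) of the selected positive literals. -/
noncomputable def grossProfit (n : ℕ) (σ : GVar n → Bool) : ℝ :=
  ∑ v ∈ Finset.univ.filter (fun v => σ v = true), (gProfit n v : ℝ)

/-- Leader value d(X ∩ U_L): prices collected on selected leader literals. -/
noncomputable def leaderValue (n : ℕ) (d : GVar n → ℝ) (σ : GVar n → Bool) : ℝ :=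
  ∑ v ∈ Finset.univ.filter (fun v => σ v = true ∧ v.isLeader = true), d v

/-- Follower's objective p(X) − d(X ∩ U_L). -/
noncomputable def followerValue (n : ℕ) (d : GVar n → ℝ) (σ : GVar n → Bool) : ℝ :=
  grossProfit n σ - leaderValue n d σ

open Finset

section

variable {n : ℕ} {σ : GVar n → Bool}

theorem SatAssign.support_eq_singleton_h1 {φ : (Fin n → Bool) → (Fin n → Bool) → Bool}
    (hσ : SatAssign n φ σ) (hh1 : σ .h1 = true) :
    univ.filter (fun v => σ v = true) = {.h1} := by
  ext v
  simp only [mem_filter, mem_univ, true_and, mem_singleton]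
  refine ⟨fun hv => ?_, fun hv => hv ▸ hh1⟩
  by_contra hne
  -- the clause h₁ → ⋀_{x ≠ h₁} x̄
  simp [hσ.2.1 hh1 v hne] at hv

theorem grossProfit_of_support_eq_singleton {v : GVar n}
    (hsupp : univ.filter (fun w => σ w = true) = {v}) :
    grossProfit n σ = gProfit n v := by
  rw [grossProfit, hsupp, sum_singleton]

theorem leaderValue_of_support_eq_singleton {v : GVar n}
    (hsupp : univ.filter (fun w => σ w = true) = {v}) (hv : v.isLeader = false) (d : GVar n → ℝ) :
    leaderValue n d σ = 0 := by
  rw [leaderValue, ← filter_filter, hsupp, filter_singleton, hv]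
  simp

end

/-- if the follower's solution contains h₁, the follower's
profit is exactly n, independently of the leader's prices d. -/
theorem stmt2 (n : ℕ) (φ : (Fin n → Bool) → (Fin n → Bool) → Bool)
    (σ : GVar n → Bool) (hσ : SatAssign n φ σ) (hh1 : σ .h1 = true) :
    ∀ d : GVar n → ℝ, followerValue n d σ = (n : ℝ) := by
  intro d
  have hsupp := hσ.support_eq_singleton_h1 hh1
  rw [followerValue, grossProfit_of_support_eq_singleton hsupp,
    leaderValue_of_support_eq_singleton hsupp rfl d, gProfit, sub_zero]
end

section
/- In the SAT-pricing instance of Theorem 5 with the leader's price function d defined by d(z₁) = M, and for each i, d on {vᵗᵢ, vᶠᵢ} taking values M−1 on the element matching assignment α and M on the other: the follower's optimal value max_{X ∈ S(I)} (p(X) − d(X ∩ U_L)) equals n, provided α : A → {0,1} makes ∀B φ(α,B) true. -/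
theorem Finset.sum_add_one_le_card {ι R : Type*} [Fintype ι] [Ring R] [PartialOrder R]
    [IsOrderedRing R] {f : ι → R} (hf : ∀ i, f i ≤ 1) {i₀ : ι} (hi₀ : f i₀ ≤ 0) :
    ∑ i, f i + 1 ≤ Fintype.card ι := by
  classical
  calc ∑ i, f i + 1 = f i₀ + ∑ i ∈ univ.erase i₀, f i + 1 := by
        rw [add_sum_erase _ _ (mem_univ i₀)]
    _ ≤ 0 + ∑ _i ∈ univ.erase i₀, (1 : R) + 1 := by
        gcongr with i; exact hf i
    _ = Fintype.card ι := by
        rw [sum_const, card_erase_of_mem (mem_univ i₀), card_univ, nsmul_one, zero_add,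
          Nat.cast_pred (Fintype.card_pos_iff.mpr ⟨i₀⟩), sub_add_cancel]

namespace GVar

variable {n : ℕ}

def equivSumProd : Fin 4 ⊕ Fin n × Fin 5 ≃ GVar n where
  toFun
    | .inl k => ![h1, h2, z1, z2] k
    | .inr (i, k) => ![vt i, vf i, vo i, va i, vb i] k
  invFun
    | h1 => .inl 0 | h2 => .inl 1 | z1 => .inl 2 | z2 => .inl 3
    | vt i => .inr (i, 0) | vf i => .inr (i, 1) | vo i => .inr (i, 2)
    | va i => .inr (i, 3) | vb i => .inr (i, 4)
  left_inv := by rintro (k | ⟨i, k⟩) <;> fin_cases k <;> rfl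
  right_inv := by rintro (_ | _ | _ | _ | _ | _ | _ | _ | _) <;> rfl

theorem sum_univ {M : Type*} [AddCommMonoid M] (f : GVar n → M) :
    ∑ v, f v = f h1 + f h2 + f z1 + f z2 +
      ∑ i, (f (vt i) + f (vf i) + f (vo i) + f (va i) + f (vb i)) := by
  rw [← equivSumProd.sum_comp, Fintype.sum_sum_type, Fin.sum_univ_four, Fintype.sum_prod_type]
  simp [equivSumProd, Fin.sum_univ_five]

end GVar

noncomputable def followerMargin (n : ℕ) (d : GVar n → ℝ) (v : GVar n) : ℝ :=
  gProfit n v - if v.isLeader then d v else 0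

noncomputable def selectedMargin {n : ℕ} (d : GVar n → ℝ) (σ : GVar n → Bool) (v : GVar n) : ℝ :=
  if σ v = true then followerMargin n d v else 0

noncomputable def gadgetMargin {n : ℕ} (d : GVar n → ℝ) (σ : GVar n → Bool) (i : Fin n) : ℝ :=
  selectedMargin d σ (.vt i) + selectedMargin d σ (.vf i) + selectedMargin d σ (.vo i) +
    selectedMargin d σ (.va i) + selectedMargin d σ (.vb i)

section Margins

variable {n : ℕ} {d : GVar n → ℝ}

@[simp] theorem followerMargin_h1 : followerMargin n d .h1 = n := by
  simp [followerMargin, gProfit, GVar.isLeader]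

@[simp] theorem followerMargin_h2 : followerMargin n d .h2 = 0 := by
  simp [followerMargin, gProfit, GVar.isLeader]

@[simp] theorem followerMargin_z2 : followerMargin n d .z2 = 1 := by
  simp [followerMargin, gProfit, GVar.isLeader]

@[simp] theorem followerMargin_vo (i : Fin n) : followerMargin n d (.vo i) = 1 := by
  simp [followerMargin, gProfit, GVar.isLeader]

@[simp] theorem followerMargin_va (i : Fin n) : followerMargin n d (.va i) = 0 := by
  simp [followerMargin, gProfit, GVar.isLeader]

@[simp] theorem followerMargin_vb (i : Fin n) : followerMargin n d (.vb i) = 0 := by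
  simp [followerMargin, gProfit, GVar.isLeader]

theorem followerMargin_z1 (hdz1 : d .z1 = (2 * n : ℝ)) : followerMargin n d .z1 = 0 := by
  simp [followerMargin, gProfit, GVar.isLeader, hdz1]

theorem followerMargin_vt {α : Fin n → Bool}
    (hdt : ∀ i : Fin n, d (.vt i) = if α i then (2 * n - 1 : ℝ) else (2 * n : ℝ)) (i : Fin n) :
    followerMargin n d (.vt i) = if α i then 1 else 0 := by
  cases hα : α i <;> simp [followerMargin, gProfit, GVar.isLeader, hdt, hα]

theorem followerMargin_vf {α : Fin n → Bool}
    (hdf : ∀ i : Fin n, d (.vf i) = if α i then (2 * n : ℝ) else (2 * n - 1 : ℝ)) (i : Fin n) :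
    followerMargin n d (.vf i) = if α i then 0 else 1 := by
  cases hα : α i <;> simp [followerMargin, gProfit, GVar.isLeader, hdf, hα]

end Margins

theorem followerValue_eq_sum_selectedMargin (n : ℕ) (d : GVar n → ℝ) (σ : GVar n → Bool) :
    followerValue n d σ = ∑ v, selectedMargin d σ v := by
  rw [followerValue, grossProfit, leaderValue, Finset.sum_filter, Finset.sum_filter,
    ← Finset.sum_sub_distrib]
  refine Finset.sum_congr rfl fun v _ => ?_
  by_cases hv : σ v = true <;> simp [selectedMargin, followerMargin, hv]

theorem followerValue_eq_add_sum_gadgetMargin (n : ℕ) (d : GVar n → ℝ) (σ : GVar n → Bool) :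
    followerValue n d σ = selectedMargin d σ .h1 + selectedMargin d σ .h2 +
      selectedMargin d σ .z1 + selectedMargin d σ .z2 + ∑ i, gadgetMargin d σ i := by
  rw [followerValue_eq_sum_selectedMargin, GVar.sum_univ]
  rfl

theorem followerValue_of_only_h1 {n : ℕ} {d : GVar n → ℝ} {σ : GVar n → Bool}
    (h1 : σ .h1 = true) (hσ : ∀ v, v ≠ .h1 → σ v = false) : followerValue n d σ = n := by
  rw [followerValue_eq_sum_selectedMargin, Finset.sum_eq_single .h1]
  · simp [selectedMargin, h1]
  · intro v _ hv
    simp [selectedMargin, hσ v hv]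
  · simp

theorem satAssign_only_h1 (n : ℕ) (φ : (Fin n → Bool) → (Fin n → Bool) → Bool) :
    SatAssign n φ (fun v => decide (v = .h1)) := by
  refine ⟨Or.inl (by simp), ?_, ?_, ?_, ?_⟩ <;> simp

section Gadget

variable {n : ℕ} {α : Fin n → Bool} {d : GVar n → ℝ}

theorem gadgetMargin_le_one
    (hdt : ∀ i : Fin n, d (.vt i) = if α i then (2 * n - 1 : ℝ) else (2 * n : ℝ))
    (hdf : ∀ i : Fin n, d (.vf i) = if α i then (2 * n : ℝ) else (2 * n - 1 : ℝ))
    {σ : GVar n → Bool} {i : Fin n}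
    (htf : ¬(σ (.vt i) = true ∧ σ (.vf i) = true))
    (hto : ¬(σ (.vt i) = true ∧ σ (.vo i) = true))
    (hfo : ¬(σ (.vf i) = true ∧ σ (.vo i) = true)) :
    gadgetMargin d σ i ≤ 1 := by
  simp only [gadgetMargin, selectedMargin, followerMargin_vt hdt, followerMargin_vf hdf,
    followerMargin_vo, followerMargin_va, followerMargin_vb, ite_self, add_zero]
  cases ht : σ (.vt i) <;> cases hf : σ (.vf i) <;> cases ho : σ (.vo i) <;> cases hα : α i <;>
    simp_all

theorem gadgetMargin_nonpos
    (hdt : ∀ i : Fin n, d (.vt i) = if α i then (2 * n - 1 : ℝ) else (2 * n : ℝ))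
    (hdf : ∀ i : Fin n, d (.vf i) = if α i then (2 * n : ℝ) else (2 * n - 1 : ℝ))
    {σ : GVar n → Bool} {i : Fin n}
    (hta : σ (.vt i) = true → σ (.va i) = true)
    (hfa : σ (.vf i) = true → σ (.va i) = false)
    (ho : σ (.vo i) = false) (hmismatch : σ (.va i) ≠ α i) :
    gadgetMargin d σ i ≤ 0 := by
  simp only [gadgetMargin, selectedMargin, followerMargin_vt hdt, followerMargin_vf hdf,
    followerMargin_vo, followerMargin_va, followerMargin_vb, ite_self, add_zero, ho]
  cases ht : σ (.vt i) <;> cases hf : σ (.vf i) <;> cases ha : σ (.va i) <;> cases hα : α i <;>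
    simp_all

end Gadget

theorem followerValue_le_of_h1_eq_false {n : ℕ} {φ : (Fin n → Bool) → (Fin n → Bool) → Bool}
    {α : Fin n → Bool} (hα : ∀ β : Fin n → Bool, φ α β = true) {d : GVar n → ℝ}
    (hdz1 : d .z1 = (2 * n : ℝ))
    (hdt : ∀ i : Fin n, d (.vt i) = if α i then (2 * n - 1 : ℝ) else (2 * n : ℝ))
    (hdf : ∀ i : Fin n, d (.vf i) = if α i then (2 * n : ℝ) else (2 * n - 1 : ℝ))
    {σ : GVar n → Bool} (hσ : SatAssign n φ σ) (h1 : σ .h1 = false) :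
    followerValue n d σ ≤ n := by
  obtain ⟨hor, -, hz, hφ, hgadget⟩ := hσ
  have h2 : σ .h2 = true := hor.resolve_left (by simp [h1])
  have hle_one (i : Fin n) : gadgetMargin d σ i ≤ 1 :=
    have ⟨⟨_, htf, hto, hfo⟩, _⟩ := hgadget h2 i
    gadgetMargin_le_one hdt hdf htf hto hfo
  rw [followerValue_eq_add_sum_gadgetMargin]
  simp only [selectedMargin, h1, followerMargin_h2, followerMargin_z1 hdz1, followerMargin_z2,
    ite_self, Bool.false_eq_true, if_false, zero_add]
  cases hz2 : σ .z2
  · simpa using Finset.sum_le_card_nsmul Finset.univ _ _ fun i _ => hle_one i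
  · have hz1 : σ .z1 = false := by simpa [hz2] using hz h2
    obtain ⟨i₀, hi₀⟩ : ∃ i, σ (.va i) ≠ α i := by
      by_contra! hA
      simpa [funext hA, hα] using hφ h2 hz2
    obtain ⟨-, hta, hfa, hoz⟩ := hgadget h2 i₀
    have ho : σ (.vo i₀) = false := by cases h : σ (.vo i₀) <;> simp_all
    simpa [add_comm] using
      Finset.sum_add_one_le_card hle_one (gadgetMargin_nonpos hdt hdf hta hfa ho hi₀)

/-- under the prices d(z₁)=M, d = M−1 on the element of
{vᵗᵢ,vᶠᵢ} matching α and M on the other, the follower's optimal value is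
exactly n, provided α witnesses ∀B φ(α,B). -/
theorem stmt4 (n : ℕ) (φ : (Fin n → Bool) → (Fin n → Bool) → Bool)
    (α : Fin n → Bool) (hα : ∀ β : Fin n → Bool, φ α β = true)
    (d : GVar n → ℝ)
    (hdz1 : d .z1 = (2 * n : ℝ))
    (hdt : ∀ i : Fin n, d (.vt i) = if α i then (2 * n - 1 : ℝ) else (2 * n : ℝ))
    (hdf : ∀ i : Fin n, d (.vf i) = if α i then (2 * n : ℝ) else (2 * n - 1 : ℝ)) :
    IsGreatest {x : ℝ | ∃ σ : GVar n → Bool, SatAssign n φ σ ∧ x = followerValue n d σ}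
      (n : ℝ) := by
  refine ⟨⟨_, satAssign_only_h1 n φ, (followerValue_of_only_h1 (by simp) (by simp)).symm⟩, ?_⟩
  rintro x ⟨σ, hσ, rfl⟩
  cases h1 : σ .h1
  · exact followerValue_le_of_h1_eq_false hα hdz1 hdt hdf hσ h1
  · exact (followerValue_of_only_h1 h1 (hσ.2.1 h1)).le
end

section
/- With the notation of the maximization meta-reduction: if there exists X ∈ S(I_SAT) with X ⊆ U_F, then for every price function d' : U'_L → ℝ the follower's optimal value max_{Y ∈ F} (p'(Y) − d'(Y)) is at least α_Π·M. -/
/-! The SSP lift `Y ∈ 𝓕` of a SAT solution `X ⊆ U_F` meets `f(U_SAT)` only in `f(X)`, so by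
injectivity of `f` it avoids `U'_L = f(U_L)` and the leader collects nothing on it. Since
`p' ≥ M·w` pointwise, `p'(Y) ≥ M·w(Y) = α_Π·M`. -/

open Classical in
/-- The profit contribution p(f⁻¹(e)) for e ∈ f(U_SAT), and 0 otherwise. -/
noncomputable def pPart {A B : Type*} (f : A → B) (p : A → ℕ) (e : B) : ℝ :=
  if h : ∃ x, f x = e then (p h.choose : ℝ) else 0

/-- New profits p'(e) = M·w(e) + p(f⁻¹(e)) on f(U_SAT), M·w(e) otherwise. -/
noncomputable def pPrime {A B : Type*} (f : A → B) (p : A → ℕ) (M : ℕ) (w : B → ℕ)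
    (e : B) : ℝ :=
  (M : ℝ) * (w e : ℝ) + pPart f p e

/-- New costs c'(e) = M·w(e) − p(f⁻¹(e)) on f(U_SAT), M·w(e) otherwise. -/
noncomputable def cPrime {A B : Type*} (f : A → B) (p : A → ℕ) (M : ℕ) (w : B → ℕ)
    (e : B) : ℝ :=
  (M : ℝ) * (w e : ℝ) - pPart f p e

/-- Leader value d'(Y) = Σ_{e ∈ Y ∩ U'_L} d'(e). -/
noncomputable def lVal {B : Type*} [DecidableEq B] (ULimg : Finset B) (d' : B → ℝ)
    (Y : Finset B) : ℝ :=
  ∑ e ∈ Y ∩ ULimg, d' e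

/-- Follower objective p'(Y) − d'(Y) in the maximization meta-reduction. -/
noncomputable def fObjMax {A B : Type*} [DecidableEq B] (f : A → B) (p : A → ℕ)
    (M : ℕ) (w : B → ℕ) (ULimg : Finset B) (d' : B → ℝ) (Y : Finset B) : ℝ :=
  (∑ e ∈ Y, pPrime f p M w e) - lVal ULimg d' Y

/-- Follower objective c'(Y) + d'(Y) in the minimization meta-reduction. -/
noncomputable def fObjMin {A B : Type*} [DecidableEq B] (f : A → B) (p : A → ℕ)
    (M : ℕ) (w : B → ℕ) (ULimg : Finset B) (d' : B → ℝ) (Y : Finset B) : ℝ :=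
  (∑ e ∈ Y, cPrime f p M w e) + lVal ULimg d' Y

section FollowerObjective

variable {A B : Type*}

theorem pPart_nonneg (f : A → B) (p : A → ℕ) (e : B) : 0 ≤ pPart f p e := by
  unfold pPart
  split_ifs <;> positivity

theorem mul_sum_le_sum_pPrime (f : A → B) (p : A → ℕ) (M : ℕ) (w : B → ℕ) (Y : Finset B) :
    (M : ℝ) * ∑ e ∈ Y, (w e : ℝ) ≤ ∑ e ∈ Y, pPrime f p M w e := by
  rw [Finset.mul_sum]
  exact Finset.sum_le_sum fun e _ => le_add_of_nonneg_right (pPart_nonneg f p e)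

theorem lVal_eq_zero_of_disjoint [DecidableEq B] {ULimg Y : Finset B} (d' : B → ℝ)
    (h : Disjoint Y ULimg) : lVal ULimg d' Y = 0 := by
  rw [lVal, Finset.disjoint_iff_inter_eq_empty.mp h, Finset.sum_empty]

theorem mul_sum_le_fObjMax_of_disjoint [DecidableEq B] {f : A → B} (p : A → ℕ) {M : ℕ}
    {w : B → ℕ} {ULimg Y : Finset B} (d' : B → ℝ) (h : Disjoint Y ULimg) :
    (M : ℝ) * ∑ e ∈ Y, (w e : ℝ) ≤ fObjMax f p M w ULimg d' Y := by
  rw [fObjMax, lVal_eq_zero_of_disjoint d' h, sub_zero]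
  exact mul_sum_le_sum_pPrime f p M w Y

theorem disjoint_image_of_inter_range_eq [Fintype A] [DecidableEq B] {f : A → B}
    (hf : Function.Injective f) {S T : Finset A} {Y : Finset B}
    (hY : Y ∩ Finset.univ.image f = S.image f) (hST : Disjoint S T) :
    Disjoint Y (T.image f) := by
  rw [Finset.disjoint_left]
  rintro _ hxY hxT'
  obtain ⟨x, hxT, rfl⟩ := Finset.mem_image.mp hxT'
  have hxS : f x ∈ S.image f :=
    hY ▸ Finset.mem_inter.mpr ⟨hxY, Finset.mem_image_of_mem f (Finset.mem_univ x)⟩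
  exact Finset.disjoint_left.mp hST (hf.mem_finset_image.mp hxS) hxT

end FollowerObjective

theorem stmt9_general {USAT UPI : Type*} [Fintype USAT] [DecidableEq UPI]
    (f : USAT → UPI) (hf : Function.Injective f)
    (UL UF : Finset USAT) (hdisj : Disjoint UL UF)
    (SSAT : Finset (Finset USAT))
    (𝓕 : Finset (Finset UPI)) (w : UPI → ℕ) (p : USAT → ℕ) (M : ℕ)
    (aPi : ℕ)
    (hlift : ∀ S ∈ SSAT, ∃ Y ∈ 𝓕, (∑ e ∈ Y, w e) = aPi ∧
      Y ∩ (Finset.univ.image f) = S.image f)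
    (hX : ∃ X ∈ SSAT, X ⊆ UF) :
    ∀ d' : UPI → ℝ, ∃ Y ∈ 𝓕,
      (aPi : ℝ) * M ≤ fObjMax f p M w (UL.image f) d' Y := by
  intro d'
  obtain ⟨X, hXSAT, hXF⟩ := hX
  obtain ⟨Y, hY𝓕, hYw, hYf⟩ := hlift X hXSAT
  refine ⟨Y, hY𝓕, ?_⟩
  have hYL : Disjoint Y (UL.image f) :=
    disjoint_image_of_inter_range_eq hf hYf (hdisj.mono_right hXF).symm
  calc (aPi : ℝ) * M = M * ∑ e ∈ Y, (w e : ℝ) := by rw [← Nat.cast_sum, hYw, mul_comm]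
    _ ≤ fObjMax f p M w (UL.image f) d' Y := mul_sum_le_fObjMax_of_disjoint p d' hYL

/-- in the maximization meta-reduction, if some SAT solution X
is contained in the follower's universe U_F, then for every price function d'
the follower's optimal value over 𝓕 is at least α_Π·M. -/
theorem stmt9 {USAT UPI : Type*} [Fintype USAT] [DecidableEq USAT] [DecidableEq UPI]
    (f : USAT → UPI) (hf : Function.Injective f)
    (UL UF : Finset USAT) (hdisj : Disjoint UL UF) (hcov : UL ∪ UF = Finset.univ)
    (SSAT : Finset (Finset USAT))
    (𝓕 : Finset (Finset UPI)) (w : UPI → ℕ) (p : USAT → ℕ) (M : ℕ)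
    (aPi : ℕ) (hαmax : ∀ F ∈ 𝓕, (∑ e ∈ F, w e) ≤ aPi)
    (hlift : ∀ S ∈ SSAT, ∃ Y ∈ 𝓕, (∑ e ∈ Y, w e) = aPi ∧
      Y ∩ (Finset.univ.image f) = S.image f)
    (hX : ∃ X ∈ SSAT, X ⊆ UF) :
    ∀ d' : UPI → ℝ, ∃ Y ∈ 𝓕,
      (aPi : ℝ) * M ≤ fObjMax f p M w (UL.image f) d' Y :=
  stmt9_general f hf UL UF hdisj SSAT 𝓕 w p M aPi hlift hX
end

section
/- Pull-back of leader value under an SSP bijection (maximization case): let f : U_SAT → U_Π be injective with {f⁻¹(Y ∩ f(U_SAT)) : Y ∈ S(I_Π)} related to S(I_SAT) by the SSP property (every Y ∈ S(I_Π) restricts to a solution f⁻¹(Y) ∈ S(I_SAT), and every S ∈ S(I_SAT) lifts to some Y ∈ S(I_Π) with Y ∩ f(U_SAT) = f(S)). Define p'(Y) = M·w(Y) + p(f⁻¹(Y ∩ f(U_SAT))) where w(Y) = α_Π is constant on S(I_Π), and d'(e) = d(f⁻¹(e)) for e ∈ f(U_L). Then max{d'(Y⋆) : Y⋆ ∈ argmax_{Y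 ∈ S(I_Π)} (p'(Y) − d'(Y))} = max{d(X⋆) : X⋆ ∈ argmax_{X ∈ S(I_SAT)} (p(X) − d(X))}. -/
/-!
Restriction `Y ↦ f⁻¹(Y)` maps the feasible sets of the Π-instance onto those of the SAT-instance,
and both the follower objective (up to the constant shift `M·α_Π`) and the leader value factor
through it. Hence the follower's argmax and the leader values attained on it transport unchanged.
-/

open Finset

theorem Finset.preimage_eq_of_inter_image_univ_eq {α β : Type*} [Fintype α] [DecidableEq α]
    [DecidableEq β] {f : α → β} (hf : Function.Injective f) {Y : Finset β} {S : Finset α}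
    (h : Y ∩ univ.image f = S.image f) : Y.preimage f hf.injOn = S := by
  ext x
  have hx : f x ∈ Y ∩ univ.image f ↔ f x ∈ S.image f := by rw [h]
  simpa [hf.eq_iff] using hx

def leaderValuesOnArgmax {α : Type*} (A : Set α) (obj lead : α → ℝ) : Set ℝ :=
  {x | ∃ X ∈ A, (∀ Z ∈ A, obj Z ≤ obj X) ∧ x = lead X}

theorem leaderValuesOnArgmax_const_add {α : Type*} (A : Set α) (c : ℝ) (obj lead : α → ℝ) :
    leaderValuesOnArgmax A (fun X => c + obj X) lead = leaderValuesOnArgmax A obj lead := by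
  simp only [leaderValuesOnArgmax, add_le_add_iff_left]

theorem leaderValuesOnArgmax_comp {α β : Type*} {A : Set β} {B : Set α} {g : β → α}
    (hmaps : Set.MapsTo g A B) (hsurj : Set.SurjOn g A B) (obj lead : α → ℝ) :
    leaderValuesOnArgmax A (obj ∘ g) (lead ∘ g) = leaderValuesOnArgmax B obj lead := by
  ext x
  constructor
  · rintro ⟨Y, hY, hopt, rfl⟩
    refine ⟨g Y, hmaps hY, fun Z hZ => ?_, rfl⟩
    obtain ⟨Z', hZ', rfl⟩ := hsurj hZ
    exact hopt Z' hZ'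
  · rintro ⟨X, hX, hopt, rfl⟩
    obtain ⟨Y, hY, rfl⟩ := hsurj hX
    exact ⟨Y, hY, fun Z hZ => hopt (g Z) (hmaps hZ), rfl⟩

/-- pull-back of leader value under an SSP bijection,
maximization case: with p'(Y) = M·α_Π + p(f⁻¹(Y)) on S(I_Π) and
d'(e) = d(f⁻¹(e)) on f(U_L), the sets of leader values over the follower's
argmax on S(I_Π) and on S(I_SAT) coincide; in particular the optimistic
maxima are equal. -/
theorem stmt10 {USAT UPI : Type*} [Fintype USAT] [DecidableEq USAT] [DecidableEq UPI]
    (f : USAT → UPI) (hf : Function.Injective f)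
    (UL : Finset USAT)
    (SSAT : Finset (Finset USAT)) (SPI : Finset (Finset UPI))
    (p : USAT → ℕ) (d : USAT → ℝ) (M aPi : ℕ)
    (hdown : ∀ Y ∈ SPI, Y.preimage f hf.injOn ∈ SSAT)
    (hup : ∀ S ∈ SSAT, ∃ Y ∈ SPI, Y ∩ Finset.univ.image f = S.image f) :
    {x : ℝ | ∃ Y ∈ SPI,
        (∀ Z ∈ SPI,
          ((M : ℝ) * aPi + ∑ e ∈ Z.preimage f hf.injOn, (p e : ℝ))
              - ∑ e ∈ Z.preimage f hf.injOn ∩ UL, d e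
            ≤ ((M : ℝ) * aPi + ∑ e ∈ Y.preimage f hf.injOn, (p e : ℝ))
              - ∑ e ∈ Y.preimage f hf.injOn ∩ UL, d e) ∧
        x = ∑ e ∈ Y.preimage f hf.injOn ∩ UL, d e} =
    {x : ℝ | ∃ X ∈ SSAT,
        (∀ Z ∈ SSAT,
          (∑ e ∈ Z, (p e : ℝ)) - ∑ e ∈ Z ∩ UL, d e
            ≤ (∑ e ∈ X, (p e : ℝ)) - ∑ e ∈ X ∩ UL, d e) ∧
        x = ∑ e ∈ X ∩ UL, d e} := by
  have hsurj : Set.SurjOn (fun Y : Finset UPI => Y.preimage f hf.injOn) SPI SSAT :=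
    fun S hS => by
      obtain ⟨Y, hY, hYS⟩ := hup S hS
      exact ⟨Y, hY, Finset.preimage_eq_of_inter_image_univ_eq hf hYS⟩
  simp_rw [add_sub_assoc]
  exact (leaderValuesOnArgmax_const_add _ _ _ _).trans <| leaderValuesOnArgmax_comp hdown hsurj
    (fun X => ∑ e ∈ X, (p e : ℝ) - ∑ e ∈ X ∩ UL, d e) (fun X => ∑ e ∈ X ∩ UL, d e)
end

section
/- WLOG-lemma for minimization SSP reductions: let U_SAT be a finite set of even size n consisting of complementary literal pairs, and suppose every S ∈ S(I_SAT) has |S| = n/2 and every F ∈ S(I_Π) satisfies |F ∩ f(U_SAT)| = n/2. Let w : U_Π → ℤ≥0, t ∈ ℤ≥0 satisfy S(I_Π) = {F ∈ F : w(F) ≤ t} = {F ∈ F : w(F) = t}. Define K = n+1, w'(e) = K·w(e) + 1 for e ∈ f(U_SAT), w'(e) = K·w(e) otherwise, and t' = K·t + n/2. Then for all F ∈ F: w(F) ≤ t ⟺ w(F) = t ⟺ w'(F) ≤ t' ⟺ w'(F) = t'. In particular {F ∈ F : w'(F) ≤ t'} = S(I_Π), and w'(e) ≥ 1 for all e ∈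 f(U_SAT). -/
/-!
The new weight is `w' = (n + 1) • w + 𝟙_{f(U_SAT)}`, so `w'(F) = (n + 1) w(F) + |F ∩ f(U_SAT)|`
with the second summand at most `n < n + 1`. Hence `w'(F) ≤ (n + 1) t + n / 2` forces `w(F) ≤ t`,
i.e. `F` is a solution, and then `|F ∩ f(U_SAT)| = n / 2` makes the bound an equality.
-/

open Finset

theorem sum_mul_add_indicator {α : Type*} [DecidableEq α] (K : ℕ) (w : α → ℕ) (S F : Finset α) :
    ∑ e ∈ F, (K * w e + if e ∈ S then 1 else 0) = K * ∑ e ∈ F, w e + #(F ∩ S) := by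
  rw [sum_add_distrib, ← mul_sum, sum_ite_mem, sum_const, smul_eq_mul, mul_one]

theorem Nat.le_of_mul_add_le_mul_add_of_lt {K a b c m : ℕ} (hm : m < K)
    (h : K * a + c ≤ K * b + m) : a ≤ b :=
  Nat.lt_succ_iff.mp <| Nat.lt_of_mul_lt_mul_left <|
    calc K * a ≤ K * b + m := le_of_add_le_left h
      _ < K * (b + 1) := by rw [mul_add_one]; omega

section ScaledWeight

variable {α : Type*} [DecidableEq α] {S F : Finset α} {w : α → ℕ} {t n : ℕ}

theorem sum_eq_iff_scaled_sum_le (hS : #S ≤ n) (hmin : ∑ e ∈ F, w e ≤ t → ∑ e ∈ F, w e = t)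
    (hhalf : ∑ e ∈ F, w e = t → #(F ∩ S) = n / 2) :
    ∑ e ∈ F, w e = t ↔
      ∑ e ∈ F, ((n + 1) * w e + if e ∈ S then 1 else 0) ≤ (n + 1) * t + n / 2 := by
  rw [sum_mul_add_indicator]
  refine ⟨fun h => by rw [h, hhalf h], fun h => hmin ?_⟩
  have hFS : #(F ∩ S) ≤ n := (card_le_card inter_subset_right).trans hS
  exact Nat.le_of_mul_add_le_mul_add_of_lt (by omega) h

theorem scaled_sum_le_iff_eq (hS : #S ≤ n) (hmin : ∑ e ∈ F, w e ≤ t → ∑ e ∈ F, w e = t)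
    (hhalf : ∑ e ∈ F, w e = t → #(F ∩ S) = n / 2) :
    ∑ e ∈ F, ((n + 1) * w e + if e ∈ S then 1 else 0) ≤ (n + 1) * t + n / 2 ↔
      ∑ e ∈ F, ((n + 1) * w e + if e ∈ S then 1 else 0) = (n + 1) * t + n / 2 := by
  refine ⟨fun h => ?_, le_of_eq⟩
  have hw := (sum_eq_iff_scaled_sum_le hS hmin hhalf).mpr h
  rw [sum_mul_add_indicator, hw, hhalf hw]

end ScaledWeight

theorem stmt11_general {USAT UPI : Type*} [Fintype USAT] [DecidableEq UPI]
    (f : USAT → UPI)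
    (𝓕 : Finset (Finset UPI)) (w : UPI → ℕ) (t : ℕ)
    (n : ℕ) (hn : n = Fintype.card USAT)
    (hSeq : ∀ F ∈ 𝓕, (∑ e ∈ F, w e) ≤ t ↔ (∑ e ∈ F, w e) = t)
    (hhalf : ∀ F ∈ 𝓕, (∑ e ∈ F, w e) = t → (F ∩ Finset.univ.image f).card = n / 2) :
    (∀ x : USAT,
        1 ≤ (n + 1) * w (f x) + (if f x ∈ Finset.univ.image f then 1 else 0)) ∧
    (∀ F ∈ 𝓕,
      ((∑ e ∈ F, w e) ≤ t ↔ (∑ e ∈ F, w e) = t) ∧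
      ((∑ e ∈ F, w e) = t ↔
        (∑ e ∈ F, ((n + 1) * w e + if e ∈ Finset.univ.image f then 1 else 0))
          ≤ (n + 1) * t + n / 2) ∧
      ((∑ e ∈ F, ((n + 1) * w e + if e ∈ Finset.univ.image f then 1 else 0))
          ≤ (n + 1) * t + n / 2 ↔
        (∑ e ∈ F, ((n + 1) * w e + if e ∈ Finset.univ.image f then 1 else 0))
          = (n + 1) * t + n / 2)) ∧
    𝓕.filter (fun F =>
        (∑ e ∈ F, ((n + 1) * w e + if e ∈ Finset.univ.image f then 1 else 0))
          ≤ (n + 1) * t + n / 2)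
      = 𝓕.filter (fun F => (∑ e ∈ F, w e) = t) := by
  have hS : #(univ.image f) ≤ n := hn ▸ card_image_le
  have key F (hF : F ∈ 𝓕) := sum_eq_iff_scaled_sum_le hS (hSeq F hF).mp (hhalf F hF)
  refine ⟨fun x => ?_, fun F hF => ⟨hSeq F hF, key F hF, ?_⟩, ?_⟩
  · simp [mem_image_of_mem f (mem_univ x)]
  · exact scaled_sum_le_iff_eq hS (hSeq F hF).mp (hhalf F hF)
  · exact filter_congr fun F hF => (key F hF).symm

/-- WLOG-lemma for minimization SSP reductions: with
K = n+1, w'(e) = K·w(e) + 1 on f(U_SAT) and K·w(e) otherwise, and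
t' = K·t + n/2, for all F ∈ 𝓕 the four conditions w(F) ≤ t, w(F) = t,
w'(F) ≤ t', w'(F) = t' are equivalent; in particular the new solution set
equals S(I_Π) and w' ≥ 1 on f(U_SAT). -/
theorem stmt11 {USAT UPI : Type*} [Fintype USAT] [DecidableEq USAT] [DecidableEq UPI]
    (f : USAT → UPI) (hf : Function.Injective f)
    (𝓕 : Finset (Finset UPI)) (w : UPI → ℕ) (t : ℕ)
    (n : ℕ) (hn : n = Fintype.card USAT) (heven : Even n)
    (hSeq : ∀ F ∈ 𝓕, (∑ e ∈ F, w e) ≤ t ↔ (∑ e ∈ F, w e) = t)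
    (hhalf : ∀ F ∈ 𝓕, (∑ e ∈ F, w e) = t → (F ∩ Finset.univ.image f).card = n / 2) :
    (∀ x : USAT,
        1 ≤ (n + 1) * w (f x) + (if f x ∈ Finset.univ.image f then 1 else 0)) ∧
    (∀ F ∈ 𝓕,
      ((∑ e ∈ F, w e) ≤ t ↔ (∑ e ∈ F, w e) = t) ∧
      ((∑ e ∈ F, w e) = t ↔
        (∑ e ∈ F, ((n + 1) * w e + if e ∈ Finset.univ.image f then 1 else 0))
          ≤ (n + 1) * t + n / 2) ∧
      ((∑ e ∈ F, ((n + 1) * w e + if e ∈ Finset.univ.image f then 1 else 0))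
          ≤ (n + 1) * t + n / 2 ↔
        (∑ e ∈ F, ((n + 1) * w e + if e ∈ Finset.univ.image f then 1 else 0))
          = (n + 1) * t + n / 2)) ∧
    𝓕.filter (fun F =>
        (∑ e ∈ F, ((n + 1) * w e + if e ∈ Finset.univ.image f then 1 else 0))
          ≤ (n + 1) * t + n / 2)
      = 𝓕.filter (fun F => (∑ e ∈ F, w e) = t) :=
  stmt11_general f 𝓕 w t n hn hSeq hhalf
end

section
/- In the 'if' direction of Theorem 5: with prices d(z₁) = M and for each i, d assigning M−1 to the element of {vᵗᵢ, vᶠᵢ} matching α(aᵢ) and M to the other, the explicit solution X = {h̄₁, h₂, z₁, z̄₂} ∪ ⋃ᵢ{v̄ᵒᵢ} ∪ ⋃_{α(aᵢ)=1}{vᵗᵢ, v̄ᶠᵢ, aᵢ} ∪ ⋃_{α(aᵢ)=0}{v̄ᵗᵢ, vᶠᵢ, āᵢ} (completed on the b-variables arbitrarily) is a satisfying solution of the constructed CNF formula, achieves follower value p(X) − d(X) = n, and yields leader value d(X) = (n+1)M − n = k⋆. -/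
/-- The explicit follower solution of the 'if' direction of Theorem 5. -/
def sigma18 (n : ℕ) (α β : Fin n → Bool) : GVar n → Bool
  | .h1 => false
  | .h2 => true
  | .z1 => true
  | .z2 => false
  | .vt i => α i
  | .vf i => !(α i)
  | .vo _ => false
  | .va i => α i
  | .vb i => β i

/-!
Every clause of the formula is checked directly on `sigma18`: `h₂` and `z₁` are true and `z₂` is
false, so the clause involving `φ` holds vacuously, and each `once` gadget is satisfied by exactly
one of `vᵗᵢ`, `vᶠᵢ`. The selected leader elements are `z₁` at price `M = 2n` and, for each `i`,
the element of `{vᵗᵢ, vᶠᵢ}` matching `α`, at price `M − 1`; the gross profit is `M` on each of these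
and `0` elsewhere. Hence the leader collects `M + n(M − 1)` and the follower keeps `n`.
-/

def GVar.equivSum (n : ℕ) :
    GVar n ≃ Unit ⊕ Unit ⊕ Unit ⊕ Unit ⊕ Fin n ⊕ Fin n ⊕ Fin n ⊕ Fin n ⊕ Fin n where
  toFun
    | .h1 => .inl ()
    | .h2 => .inr (.inl ())
    | .z1 => .inr (.inr (.inl ()))
    | .z2 => .inr (.inr (.inr (.inl ())))
    | .vt i => .inr (.inr (.inr (.inr (.inl i))))
    | .vf i => .inr (.inr (.inr (.inr (.inr (.inl i)))))
    | .vo i => .inr (.inr (.inr (.inr (.inr (.inr (.inl i))))))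
    | .va i => .inr (.inr (.inr (.inr (.inr (.inr (.inr (.inl i)))))))
    | .vb i => .inr (.inr (.inr (.inr (.inr (.inr (.inr (.inr i)))))))
  invFun
    | .inl () => .h1
    | .inr (.inl ()) => .h2
    | .inr (.inr (.inl ())) => .z1
    | .inr (.inr (.inr (.inl ()))) => .z2
    | .inr (.inr (.inr (.inr (.inl i)))) => .vt i
    | .inr (.inr (.inr (.inr (.inr (.inl i))))) => .vf i
    | .inr (.inr (.inr (.inr (.inr (.inr (.inl i)))))) => .vo i
    | .inr (.inr (.inr (.inr (.inr (.inr (.inr (.inl i))))))) => .va i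
    | .inr (.inr (.inr (.inr (.inr (.inr (.inr (.inr i))))))) => .vb i
  left_inv v := by cases v <;> rfl
  right_inv x := by rcases x with ⟨⟩ | ⟨⟩ | ⟨⟩ | ⟨⟩ | i | i | i | i | i <;> rfl

theorem GVar.sum_univ_s18 {n : ℕ} {M : Type*} [AddCommMonoid M] (f : GVar n → M) :
    ∑ v, f v = f .h1 + f .h2 + f .z1 + f .z2 + ∑ i, f (.vt i) + ∑ i, f (.vf i)
      + ∑ i, f (.vo i) + ∑ i, f (.va i) + ∑ i, f (.vb i) := by
  rw [← (GVar.equivSum n).symm.sum_comp]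
  simp only [Fintype.sum_sum_type, Fintype.sum_unique, GVar.equivSum, Equiv.coe_fn_symm_mk,
    add_assoc]

theorem sum_ite_true_add_sum_ite_false {ι M : Type*} [Fintype ι] [AddCommMonoid M]
    (α : ι → Bool) (c : M) :
    ∑ i, (if α i = true then c else 0) + ∑ i, (if α i = false then c else 0)
      = Fintype.card ι • c := by
  rw [← Finset.sum_add_distrib, ← Finset.card_univ, ← Finset.sum_const]
  refine Finset.sum_congr rfl fun i _ => ?_
  cases α i <;> simp

theorem satAssign_sigma18 (n : ℕ) (φ : (Fin n → Bool) → (Fin n → Bool) → Bool)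
    (α β : Fin n → Bool) : SatAssign n φ (sigma18 n α β) := by
  refine ⟨Or.inr rfl, by simp [sigma18], by simp [sigma18], by simp [sigma18], fun _ i => ?_⟩
  cases α i <;> simp [sigma18, *]

section Values

variable {n : ℕ} {α : Fin n → Bool} {d : GVar n → ℝ}

theorem grossProfit_sigma18 (β : Fin n → Bool) :
    grossProfit n (sigma18 n α β) = 2 * n + n * (2 * n) := by
  rw [grossProfit, Finset.sum_filter, GVar.sum_univ_s18]
  simp only [sigma18, gProfit]
  simp [add_assoc, sum_ite_true_add_sum_ite_false]

theorem leaderValue_sigma18 (β : Fin n → Bool) (hdz1 : d .z1 = (2 * n : ℝ))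
    (hdt : ∀ i : Fin n, d (.vt i) = if α i then (2 * n - 1 : ℝ) else (2 * n : ℝ))
    (hdf : ∀ i : Fin n, d (.vf i) = if α i then (2 * n : ℝ) else (2 * n - 1 : ℝ)) :
    leaderValue n d (sigma18 n α β) = 2 * n + n * (2 * n - 1) := by
  rw [leaderValue, Finset.sum_filter, GVar.sum_univ_s18]
  simp +contextual [sigma18, GVar.isLeader, hdz1, hdt, hdf, add_assoc,
    sum_ite_true_add_sum_ite_false]

end Values

theorem stmt18_general (n : ℕ) (φ : (Fin n → Bool) → (Fin n → Bool) → Bool)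
    (α : Fin n → Bool)
    (β : Fin n → Bool)
    (d : GVar n → ℝ)
    (hdz1 : d .z1 = (2 * n : ℝ))
    (hdt : ∀ i : Fin n, d (.vt i) = if α i then (2 * n - 1 : ℝ) else (2 * n : ℝ))
    (hdf : ∀ i : Fin n, d (.vf i) = if α i then (2 * n : ℝ) else (2 * n - 1 : ℝ)) :
    SatAssign n φ (sigma18 n α β) ∧
    followerValue n d (sigma18 n α β) = (n : ℝ) ∧
    leaderValue n d (sigma18 n α β) = ((n : ℝ) + 1) * (2 * n) - n := by
  have hleader := leaderValue_sigma18 β hdz1 hdt hdf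
  refine ⟨satAssign_sigma18 n φ α β, ?_, by rw [hleader]; ring⟩
  rw [followerValue, grossProfit_sigma18, hleader]
  ring

/-- with the prices of Statement 4, the explicit solution X
is satisfying, achieves follower value n and leader value (n+1)M − n = k⋆. -/
theorem stmt18 (n : ℕ) (φ : (Fin n → Bool) → (Fin n → Bool) → Bool)
    (α : Fin n → Bool) (hα : ∀ β : Fin n → Bool, φ α β = true)
    (β : Fin n → Bool)
    (d : GVar n → ℝ)
    (hdz1 : d .z1 = (2 * n : ℝ))
    (hdt : ∀ i : Fin n, d (.vt i) = if α i then (2 * n - 1 : ℝ) else (2 * n : ℝ))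
    (hdf : ∀ i : Fin n, d (.vf i) = if α i then (2 * n : ℝ) else (2 * n - 1 : ℝ)) :
    SatAssign n φ (sigma18 n α β) ∧
    followerValue n d (sigma18 n α β) = (n : ℝ) ∧
    leaderValue n d (sigma18 n α β) = ((n : ℝ) + 1) * (2 * n) - n :=
  stmt18_general n φ α β d hdz1 hdt hdf
end

section
/- In the 'only if' direction of Theorem 5: if X_d is a follower-optimal satisfying solution with z₁ ∈ X_d, d(z₁) ≥ M, |X_d ∩ {vᵗᵢ,vᶠᵢ}| = 1 for all i, and the induced assignment α (α(aᵢ) = 1 iff vᵗᵢ ∈ X_d) does NOT satisfy ∀B φ(α,B), then X' := (X_d ∖ {z₁, z̄₂}) ∪ {z̄₁, z₂} (with the b-variables reassigned to a falsifying assignment of φ(α,·)) is a satisfying solution with strictly larger follower value p(X') − d(X') > p(X_d) − d(X_d), contradicting optimality of X_d. -/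
/-- The swapped solution X' = (X_d ∖ {z₁, z̄₂}) ∪ {z̄₁, z₂}, with the
b-variables reassigned to β. -/
def swap19 (n : ℕ) (σ : GVar n → Bool) (β : Fin n → Bool) : GVar n → Bool
  | .z1 => false
  | .z2 => true
  | .vb i => β i
  | v => σ v

/-!
Selecting z₁ earns the follower 2n − d(z₁) ≤ 0, while z₂ earns 1 and carries no leader price,
so trading z₁ for z₂ strictly improves the follower. The trade stays feasible: every a-variable
copies vᵗᵢ, so the clause z₂ → ¬φ(A, B) holds once B is a falsifying assignment of φ(α, ·), and
since each pair {vᵗᵢ, vᶠᵢ} is already hit, no vᵒᵢ is selected and the clauses vᵒᵢ → z₁ are vacuous.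
-/

namespace SatAssign

variable {n : ℕ} {φ : (Fin n → Bool) → (Fin n → Bool) → Bool} {σ : GVar n → Bool}

theorem h1_eq_false (hσ : SatAssign n φ σ) (hz1 : σ .z1 = true) : σ .h1 = false := by
  cases h : σ .h1
  · rfl
  · simpa [hz1] using hσ.2.1 h .z1 nofun

theorem h2_eq_true (hσ : SatAssign n φ σ) (hz1 : σ .z1 = true) : σ .h2 = true :=
  hσ.1.resolve_left (by rw [hσ.h1_eq_false hz1]; decide)

theorem z2_eq_false (hσ : SatAssign n φ σ) (hz1 : σ .z1 = true) : σ .z2 = false := by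
  simpa [hz1] using (hσ.2.2.1 (hσ.h2_eq_true hz1)).symm

theorem vo_eq_false (hσ : SatAssign n φ σ) (hz1 : σ .z1 = true)
    (hone : ∀ i, Xor' (σ (.vt i) = true) (σ (.vf i) = true)) (i : Fin n) :
    σ (.vo i) = false := by
  obtain ⟨⟨-, -, hto, hfo⟩, -⟩ := hσ.2.2.2.2 (hσ.h2_eq_true hz1) i
  rcases hone i with ⟨ht, -⟩ | ⟨hf, -⟩
  · simpa using fun h => hto ⟨ht, h⟩
  · simpa using fun h => hfo ⟨hf, h⟩

theorem va_eq_vt (hσ : SatAssign n φ σ) (hz1 : σ .z1 = true)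
    (hone : ∀ i, Xor' (σ (.vt i) = true) (σ (.vf i) = true)) (i : Fin n) :
    σ (.va i) = σ (.vt i) := by
  obtain ⟨-, hta, hfa, -⟩ := hσ.2.2.2.2 (hσ.h2_eq_true hz1) i
  rcases hone i with ⟨ht, -⟩ | ⟨hf, hnt⟩
  · rw [ht, hta ht]
  · rw [hfa hf, Bool.eq_false_iff.mpr hnt]

theorem swap19 (hσ : SatAssign n φ σ) (hz1 : σ .z1 = true)
    (hone : ∀ i, Xor' (σ (.vt i) = true) (σ (.vf i) = true)) {β : Fin n → Bool}
    (hβ : φ (fun i => σ (.vt i)) β = false) : SatAssign n φ (swap19 n σ β) := by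
  have hh2 := hσ.h2_eq_true hz1
  refine ⟨Or.inr hh2, fun h => ?_, fun _ => by simp [_root_.swap19], fun _ _ => ?_, fun _ i => ?_⟩
  · simp [_root_.swap19, hσ.h1_eq_false hz1] at h
  · simpa [_root_.swap19, hσ.va_eq_vt hz1 hone] using hβ
  · obtain ⟨hlit, hta, hfa, -⟩ := hσ.2.2.2.2 hh2 i
    exact ⟨hlit, hta, hfa, by simp [_root_.swap19, hσ.vo_eq_false hz1 hone i]⟩

end SatAssign

noncomputable def netProfit (n : ℕ) (d : GVar n → ℝ) (v : GVar n) : ℝ :=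
  gProfit n v - if v.isLeader then d v else 0

theorem followerValue_eq_sum_netProfit (n : ℕ) (d : GVar n → ℝ) (σ : GVar n → Bool) :
    followerValue n d σ = ∑ v, if σ v then netProfit n d v else 0 := by
  rw [followerValue, grossProfit, leaderValue, Finset.sum_filter, Finset.sum_filter,
    ← Finset.sum_sub_distrib]
  refine Finset.sum_congr rfl fun v _ => ?_
  unfold netProfit
  cases σ v <;> cases v.isLeader <;> simp

theorem followerValue_swap19 {n : ℕ} {d : GVar n → ℝ} {σ : GVar n → Bool}
    (hz1 : σ .z1 = true) (hz2 : σ .z2 = false) (β : Fin n → Bool) :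
    followerValue n d (swap19 n σ β) = followerValue n d σ + (d .z1 - 2 * n) + 1 := by
  have hdiff : followerValue n d (swap19 n σ β) - followerValue n d σ =
      (-netProfit n d .z1) + netProfit n d .z2 := by
    rw [followerValue_eq_sum_netProfit, followerValue_eq_sum_netProfit,
      ← Finset.sum_sub_distrib, Fintype.sum_eq_add .z1 .z2 (by simp)]
    · simp [swap19, hz1, hz2]
    · rintro (_ | _ | _ | _ | _ | _ | _ | _ | i) ⟨h1, h2⟩ <;>
        simp_all [swap19, netProfit, gProfit, GVar.isLeader]
  simp only [netProfit, gProfit, GVar.isLeader] at hdiff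
  push_cast at hdiff
  linarith

theorem stmt19_general (n : ℕ) (φ : (Fin n → Bool) → (Fin n → Bool) → Bool)
    (d : GVar n → ℝ) (σd : GVar n → Bool)
    (hσ : SatAssign n φ σd)
    (hz1 : σd .z1 = true)
    (hdz1 : (2 * n : ℝ) ≤ d .z1)
    (hone : ∀ i : Fin n, Xor' (σd (.vt i) = true) (σd (.vf i) = true))
    (β : Fin n → Bool)
    (hβ : φ (fun i => σd (.vt i)) β = false) :
    SatAssign n φ (swap19 n σd β) ∧
    followerValue n d σd < followerValue n d (swap19 n σd β) := by
  refine ⟨hσ.swap19 hz1 hone hβ, ?_⟩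
  rw [followerValue_swap19 hz1 (hσ.z2_eq_false hz1)]
  linarith

/-- in the 'only if' direction of Theorem 5, if the induced
assignment α does not satisfy ∀B φ(α,B) (witnessed by a falsifying β), the
swapped solution X' is satisfying and has strictly larger follower value,
contradicting optimality of X_d. -/
theorem stmt19 (n : ℕ) (φ : (Fin n → Bool) → (Fin n → Bool) → Bool)
    (d : GVar n → ℝ) (σd : GVar n → Bool)
    (hσ : SatAssign n φ σd)
    (hopt : ∀ σ : GVar n → Bool, SatAssign n φ σ →
      followerValue n d σ ≤ followerValue n d σd)
    (hz1 : σd .z1 = true)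
    (hdz1 : (2 * n : ℝ) ≤ d .z1)
    (hone : ∀ i : Fin n, Xor' (σd (.vt i) = true) (σd (.vf i) = true))
    (β : Fin n → Bool)
    (hβ : φ (fun i => σd (.vt i)) β = false) :
    SatAssign n φ (swap19 n σd β) ∧
    followerValue n d σd < followerValue n d (swap19 n σd β) :=
  stmt19_general n φ d σd hσ hz1 hdz1 hone β hβ
end
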